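/- Under the DCSBM population setup with simple eigenvalues of D̃P̃D̃, every row of X is nonzero, and the row-normalized matrix X* satisfies: for any two nodes i and j with g_i = g_j, the i-th and j-th rows of X* are equal. -/

import Mathlib

open Matrix BigOperators MeasureTheory ProbabilityTheory

noncomputable section

namespace DCSBM

variable {n K : ℕ}

/-- The `n × K` membership matrix `Z` with `Z i k = 1` iff node `i` is in community `k`. -/
def Zmat (g : Fin n → Fin K) : Matrix (Fin n) (Fin K) ℝ :=
  Matrix.of fun i k => if g i = k then (1 : ℝ) else 0

/-- The population expectation matrix `Ω = Θ Z P Zᵀ Θ`. -/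
def Omega (g : Fin n → Fin K) (θ : Fin n → ℝ) (P : Matrix (Fin K) (Fin K) ℝ) :
    Matrix (Fin n) (Fin n) ℝ :=
  Matrix.diagonal θ * Zmat g * P * (Zmat g)ᵀ * Matrix.diagonal θ

/-- Expected degrees `𝒟_ii = ∑_j Ω_ij`. -/
def Dvec (g : Fin n → Fin K) (θ : Fin n → ℝ) (P : Matrix (Fin K) (Fin K) ℝ) : Fin n → ℝ :=
  fun i => ∑ j, Omega g θ P i j

/-- The regularized population Laplacian `𝓛_δ = 𝒟_δ^{-1/2} Ω 𝒟_δ^{-1/2}`. -/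
def Ldelta (g : Fin n → Fin K) (θ : Fin n → ℝ) (P : Matrix (Fin K) (Fin K) ℝ) (δ d : ℝ) :
    Matrix (Fin n) (Fin n) ℝ :=
  Matrix.diagonal (fun i => (Real.sqrt (Dvec g θ P i + δ * d))⁻¹) * Omega g θ P *
    Matrix.diagonal (fun i => (Real.sqrt (Dvec g θ P i + δ * d))⁻¹)

/-- `θ^δ_i = θ_i 𝒟_ii / (𝒟_ii + δ d)`. -/
def thetaDelta (g : Fin n → Fin K) (θ : Fin n → ℝ) (P : Matrix (Fin K) (Fin K) ℝ) (δ d : ℝ) :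
    Fin n → ℝ :=
  fun i => θ i * Dvec g θ P i / (Dvec g θ P i + δ * d)

/-- `θ̃_i = √(θ^δ_i)`. -/
def thetaTilde (g : Fin n → Fin K) (θ : Fin n → ℝ) (P : Matrix (Fin K) (Fin K) ℝ) (δ d : ℝ) :
    Fin n → ℝ :=
  fun i => Real.sqrt (thetaDelta g θ P δ d i)

/-- `θ̃^{(k)}_i = θ̃_i · 1{g i = k}`. -/
def thetaTildeK (g : Fin n → Fin K) (θ : Fin n → ℝ) (P : Matrix (Fin K) (Fin K) ℝ) (δ d : ℝ)
    (k : Fin K) : Fin n → ℝ :=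
  fun i => if g i = k then thetaTilde g θ P δ d i else 0

/-- Euclidean norm of a vector. -/
def normE {m : ℕ} (v : Fin m → ℝ) : ℝ := Real.sqrt (∑ i, v i ^ 2)

/-- Row sums of `Q = P Zᵀ Θ`, the diagonal entries of `D_P`. -/
def DPvec (g : Fin n → Fin K) (θ : Fin n → ℝ) (P : Matrix (Fin K) (Fin K) ℝ) : Fin K → ℝ :=
  fun k => ∑ j, (P * (Zmat g)ᵀ * Matrix.diagonal θ) k j

/-- `P̃ = D_P^{-1/2} P D_P^{-1/2}`. -/
def Ptilde (g : Fin n → Fin K) (θ : Fin n → ℝ) (P : Matrix (Fin K) (Fin K) ℝ) :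
    Matrix (Fin K) (Fin K) ℝ :=
  Matrix.diagonal (fun k => (Real.sqrt (DPvec g θ P k))⁻¹) * P *
    Matrix.diagonal (fun k => (Real.sqrt (DPvec g θ P k))⁻¹)

/-- `D̃ = diag(‖θ̃^{(k)}‖ / ‖θ̃‖)`. -/
def Dtilde (g : Fin n → Fin K) (θ : Fin n → ℝ) (P : Matrix (Fin K) (Fin K) ℝ) (δ d : ℝ) :
    Matrix (Fin K) (Fin K) ℝ :=
  Matrix.diagonal fun k => normE (thetaTildeK g θ P δ d k) / normE (thetaTilde g θ P δ d)

/-- `Γ̃`, the `n × K` matrix whose `k`-th column is `θ̃^{(k)} / ‖θ̃^{(k)}‖`. -/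
def Gamma (g : Fin n → Fin K) (θ : Fin n → ℝ) (P : Matrix (Fin K) (Fin K) ℝ) (δ d : ℝ) :
    Matrix (Fin n) (Fin K) ℝ :=
  Matrix.of fun i k => thetaTildeK g θ P δ d k i / normE (thetaTildeK g θ P δ d k)


/-!
Row `i` of `Γ̃` has a single nonzero entry, in column `g i`, so `X i = c i • w (g i)` with
`c i = θ̃ i / ‖θ̃^{(g i)}‖ > 0` and `w k = (λ₁ a₁ k, …, λ_K a_K k, 0)`. Each `w k` is nonzero:
the `λ_j` are nonzero because `D̃P̃D̃` is nonsingular, and the `a_j`, eigenvectors for distinct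
eigenvalues, form a basis of `ℝ^K`, so no coordinate vanishes on all of them. Normalizing a row
removes the positive factor `c i`, leaving `w (g i) / ‖w (g i)‖`.
-/

section normE

variable {m : ℕ}

lemma normE_eq_norm (v : Fin m → ℝ) : normE v = ‖WithLp.toLp 2 v‖ := by
  simp [normE, EuclideanSpace.norm_eq]

lemma normE_eq_zero_iff {v : Fin m → ℝ} : normE v = 0 ↔ v = 0 := by
  rw [normE_eq_norm, norm_eq_zero, WithLp.toLp_eq_zero]

lemma normE_pos_iff {v : Fin m → ℝ} : 0 < normE v ↔ v ≠ 0 := by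
  rw [normE_eq_norm, norm_pos_iff, Ne, WithLp.toLp_eq_zero]

lemma normE_smul (c : ℝ) (v : Fin m → ℝ) : normE (c • v) = |c| * normE v := by
  rw [normE_eq_norm, normE_eq_norm, WithLp.toLp_smul, norm_smul, Real.norm_eq_abs]

lemma normE_pos_of_apply_ne_zero {v : Fin m → ℝ} {i : Fin m} (hi : v i ≠ 0) : 0 < normE v :=
  normE_pos_iff.2 fun h => hi (congrFun h i)

theorem normalize_rows_eq_of_eq_smul {ι κ : Type*} (X : ι → Fin m → ℝ) (g : ι → κ)
    (c : ι → ℝ) (w : κ → Fin m → ℝ) (hc : ∀ i, 0 < c i) (hw : ∀ k, w k ≠ 0)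
    (hX : ∀ i, X i = c i • w (g i)) :
    (∀ i, normE (X i) ≠ 0) ∧
      ∀ i i', g i = g i' → (fun j => X i j / normE (X i)) = fun j => X i' j / normE (X i') := by
  have hnorm : ∀ i, normE (X i) = c i * normE (w (g i)) := fun i => by
    rw [hX, normE_smul, abs_of_pos (hc i)]
  have hnormalize : ∀ i,
      (fun j => X i j / normE (X i)) = fun j => w (g i) j / normE (w (g i)) := fun i => by
    funext j
    rw [hnorm, hX, Pi.smul_apply, smul_eq_mul, mul_div_mul_left _ _ (hc i).ne']
  refine ⟨fun i => ?_, fun i i' hi => by rw [hnormalize, hnormalize, hi]⟩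
  rw [hnorm]
  exact mul_ne_zero (hc i).ne' (normE_pos_iff.2 (hw _)).ne'

end normE

section LinearAlgebra

variable {ι R : Type*} [Fintype ι]

theorem _root_.Matrix.linearIndependent_of_mulVec_eq_smul [Field R] {κ : Type*} (M : Matrix ι ι R)
    (μ : κ → R) (hμ : Function.Injective μ) (v : κ → ι → R) (hv : ∀ j, v j ≠ 0)
    (h : ∀ j, M *ᵥ v j = μ j • v j) : LinearIndependent R v :=
  Module.End.eigenvectors_linearIndependent' M.mulVecLin μ hμ v fun j =>
    ⟨Module.End.mem_eigenspace_iff.2 (h j), hv j⟩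

theorem exists_apply_ne_zero_of_linearIndependent [Field R] {v : ι → ι → R}
    (hv : LinearIndependent R v) (k : ι) : ∃ j, v j k ≠ 0 := by
  classical
  by_contra! h
  have hspan : Submodule.span R (Set.range v) = ⊤ :=
    hv.span_eq_top_of_card_eq_finrank' (Module.finrank_fintype_fun_eq_card R).symm
  have hle : Submodule.span R (Set.range v) ≤ LinearMap.ker (LinearMap.proj k) :=
    Submodule.span_le.2 (Set.range_subset_iff.2 h)
  rw [hspan] at hle
  simpa using hle (Submodule.mem_top (x := Pi.single k (1 : R)))

variable [DecidableEq ι]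

theorem _root_.Matrix.ne_zero_of_det_ne_zero_of_mulVec_eq_smul [CommRing R] [IsDomain R]
    {M : Matrix ι ι R} (hM : M.det ≠ 0) {μ : R} {v : ι → R} (hv : v ≠ 0)
    (h : M *ᵥ v = μ • v) : μ ≠ 0 := by
  rintro rfl
  exact hv (Matrix.eq_zero_of_mulVec_eq_zero hM (by rw [h, zero_smul]))

theorem _root_.Matrix.exists_pos_of_det_ne_zero [CommRing R] [LinearOrder R] {P : Matrix ι ι R}
    (hP : P.det ≠ 0) (hnn : ∀ k l, 0 ≤ P k l) (k : ι) : ∃ l, 0 < P k l := by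
  by_contra! h
  exact hP (Matrix.det_eq_zero_of_row_eq_zero k fun l => le_antisymm (h l) (hnn k l))

end LinearAlgebra

section Population

variable {g : Fin n → Fin K} {θ : Fin n → ℝ} {P : Matrix (Fin K) (Fin K) ℝ} {δ d : ℝ}

lemma Zmat_mul_apply {m : Type*} (A : Matrix (Fin K) m ℝ) (i : Fin n)
    (l : m) : (Zmat g * A) i l = A (g i) l := by
  simp [Zmat, Matrix.mul_apply]

lemma mul_Zmat_transpose_apply {m : Type*} [Fintype m] (A : Matrix m (Fin K) ℝ) (k : m) (j : Fin n) : (A * (Zmat g)ᵀ) k j = A k (g j) := by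
  simp [Zmat, Matrix.mul_apply]

lemma Omega_apply (i j : Fin n) : Omega g θ P i j = θ i * P (g i) (g j) * θ j := by
  rw [Omega, Matrix.mul_diagonal, mul_Zmat_transpose_apply, Matrix.mul_assoc,
    Matrix.diagonal_mul, Zmat_mul_apply]

lemma DPvec_eq (k : Fin K) : DPvec g θ P k = ∑ j, P k (g j) * θ j := by
  simp only [DPvec, Matrix.mul_diagonal, mul_Zmat_transpose_apply]

lemma Gamma_mulVec_apply (v : Fin K → ℝ) (i : Fin n) :
    (Gamma g θ P δ d *ᵥ v) i =
      thetaTilde g θ P δ d i / normE (thetaTildeK g θ P δ d (g i)) * v (g i) := by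
  rw [Matrix.mulVec, dotProduct, Finset.sum_eq_single (g i)]
  · simp [Gamma, thetaTildeK]
  · intro k _ hk
    simp [Gamma, thetaTildeK, Ne.symm hk]
  · simp

lemma Dvec_eq_mul_DPvec (i : Fin n) : Dvec g θ P i = θ i * DPvec g θ P (g i) := by
  simp only [Dvec, Omega_apply, DPvec_eq, Finset.mul_sum, mul_assoc]

lemma DPvec_pos (hg : Function.Surjective g) (hθ : ∀ i, 0 < θ i) (hPdet : P.det ≠ 0)
    (hPnn : ∀ k l, 0 ≤ P k l) (k : Fin K) : 0 < DPvec g θ P k := by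
  obtain ⟨l, hl⟩ := P.exists_pos_of_det_ne_zero hPdet hPnn k
  obtain ⟨j, rfl⟩ := hg l
  rw [DPvec_eq]
  exact Finset.sum_pos' (fun j _ => mul_nonneg (hPnn _ _) (hθ j).le)
    ⟨j, Finset.mem_univ _, mul_pos hl (hθ j)⟩

lemma thetaTilde_pos (hg : Function.Surjective g) (hθ : ∀ i, 0 < θ i) (hPdet : P.det ≠ 0)
    (hPnn : ∀ k l, 0 ≤ P k l) (hδ : 0 < δ) (hd : 0 < d) (i : Fin n) :
    0 < thetaTilde g θ P δ d i := by
  have hD : 0 < Dvec g θ P i := by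
    rw [Dvec_eq_mul_DPvec]
    exact mul_pos (hθ i) (DPvec_pos hg hθ hPdet hPnn _)
  exact Real.sqrt_pos.2 (div_pos (mul_pos (hθ i) hD) (add_pos hD (mul_pos hδ hd)))

lemma normE_thetaTildeK_pos {i : Fin n} (hi : 0 < thetaTilde g θ P δ d i) :
    0 < normE (thetaTildeK g θ P δ d (g i)) :=
  normE_pos_of_apply_ne_zero (i := i) (by simpa [thetaTildeK] using hi.ne')

lemma det_Dtilde_mul_Ptilde_mul_Dtilde_ne_zero (hg : Function.Surjective g)
    (hθ : ∀ i, 0 < θ i) (hPdet : P.det ≠ 0) (hPnn : ∀ k l, 0 ≤ P k l) (hδ : 0 < δ)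
    (hd : 0 < d) : (Dtilde g θ P δ d * Ptilde g θ P * Dtilde g θ P δ d).det ≠ 0 := by
  have hθt := thetaTilde_pos hg hθ hPdet hPnn hδ hd
  have hDtilde : (Dtilde g θ P δ d).det ≠ 0 := by
    rw [Dtilde, Matrix.det_diagonal]
    refine Finset.prod_ne_zero_iff.2 fun k _ => ?_
    obtain ⟨i, rfl⟩ := hg k
    exact div_ne_zero (normE_thetaTildeK_pos (hθt i)).ne'
      (normE_pos_of_apply_ne_zero (hθt i).ne').ne'
  have hscale : (Matrix.diagonal fun k => (√(DPvec g θ P k))⁻¹).det ≠ 0 := by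
    rw [Matrix.det_diagonal]
    exact Finset.prod_ne_zero_iff.2 fun k _ =>
      inv_ne_zero (Real.sqrt_pos.2 (DPvec_pos hg hθ hPdet hPnn k)).ne'
  simp only [Ptilde, Matrix.det_mul]
  exact mul_ne_zero (mul_ne_zero hDtilde (mul_ne_zero (mul_ne_zero hscale hPdet) hscale)) hDtilde

end Population

theorem stmt7_general {n K : ℕ}
    (g : Fin n → Fin K) (hg : Function.Surjective g)
    (θ : Fin n → ℝ) (hθ : ∀ i, 0 < θ i)
    (P : Matrix (Fin K) (Fin K) ℝ) (hPdet : P.det ≠ 0)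
    (hPnn : ∀ k l, 0 ≤ P k l)
    (δ d : ℝ) (hδ : 0 < δ) (hd : 0 < d)
    (lam : Fin K → ℝ) (a : Fin K → Fin K → ℝ)
    (heig : ∀ j, (Dtilde g θ P δ d * Ptilde g θ P * Dtilde g θ P δ d) *ᵥ a j =
      (lam j / (normE (thetaTilde g θ P δ d)) ^ 2) • a j)
    (haunit : ∀ j, normE (a j) = 1)
    (hsimple : Function.Injective lam)
    (X : Matrix (Fin n) (Fin (K + 1)) ℝ)
    (hX : ∀ (i : Fin n) (j : Fin (K + 1)), X i j =
      if h : (j : ℕ) < K then lam ⟨j, h⟩ * ((Gamma g θ P δ d) *ᵥ a ⟨j, h⟩) i else 0) :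
    (∀ i : Fin n, normE (X i) ≠ 0) ∧
      ∀ i i' : Fin n, g i = g i' →
        (fun j => X i j / normE (X i)) = (fun j => X i' j / normE (X i')) := by
  have hθt := thetaTilde_pos hg hθ hPdet hPnn hδ hd
  have hM := det_Dtilde_mul_Ptilde_mul_Dtilde_ne_zero hg hθ hPdet hPnn hδ hd
  have ha : ∀ j, a j ≠ 0 := fun j h =>
    one_ne_zero ((haunit j).symm.trans (normE_eq_zero_iff.2 h))
  have hlam : ∀ j, lam j ≠ 0 := fun j =>
    left_ne_zero_of_mul (Matrix.ne_zero_of_det_ne_zero_of_mulVec_eq_smul hM (ha j) (heig j))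
  have hLI : LinearIndependent ℝ a := by
    refine Matrix.linearIndependent_of_mulVec_eq_smul _ _ (fun j j' h => hsimple ?_) a ha heig
    obtain ⟨i, -⟩ := hg j
    exact (div_left_inj' (pow_ne_zero 2 (normE_pos_of_apply_ne_zero (hθt i).ne').ne')).1 h
  refine normalize_rows_eq_of_eq_smul X g
    (fun i => thetaTilde g θ P δ d i / normE (thetaTildeK g θ P δ d (g i)))
    (fun k j => if h : (j : ℕ) < K then lam ⟨j, h⟩ * a ⟨j, h⟩ k else 0)
    (fun i => div_pos (hθt i) (normE_thetaTildeK_pos (hθt i))) (fun k hw => ?_)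
    (fun i => funext fun j => ?_)
  · obtain ⟨j, hj⟩ := exists_apply_ne_zero_of_linearIndependent hLI k
    have := congrFun hw j.castSucc
    simp only [Fin.val_castSucc, j.isLt, dite_true, Pi.zero_apply] at this
    exact mul_ne_zero (hlam j) hj this
  · rw [hX, Pi.smul_apply, smul_eq_mul]
    split_ifs
    · rw [Gamma_mulVec_apply]
      ring
    · rw [mul_zero]

/-- Every row of `X` is nonzero, and the row-normalized matrix `X*` has equal rows for
nodes in the same community. -/
theorem stmt7 {n K : ℕ} (hK : 1 ≤ K) (hKn : K ≤ n)
    (g : Fin n → Fin K) (hg : Function.Surjective g)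
    (θ : Fin n → ℝ) (hθ : ∀ i, 0 < θ i)
    (P : Matrix (Fin K) (Fin K) ℝ) (hPsymm : P.IsSymm) (hPdet : P.det ≠ 0)
    (hPnn : ∀ k l, 0 ≤ P k l)
    (δ d : ℝ) (hδ : 0 < δ) (hd : 0 < d)
    (lam : Fin K → ℝ) (a : Fin K → Fin K → ℝ)
    (heig : ∀ j, (Dtilde g θ P δ d * Ptilde g θ P * Dtilde g θ P δ d) *ᵥ a j =
      (lam j / (normE (thetaTilde g θ P δ d)) ^ 2) • a j)
    (haunit : ∀ j, normE (a j) = 1)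
    (hdesc : ∀ j j' : Fin K, j ≤ j' → |lam j'| ≤ |lam j|)
    (hsimple : Function.Injective lam)
    (X : Matrix (Fin n) (Fin (K + 1)) ℝ)
    (hX : ∀ (i : Fin n) (j : Fin (K + 1)), X i j =
      if h : (j : ℕ) < K then lam ⟨j, h⟩ * ((Gamma g θ P δ d) *ᵥ a ⟨j, h⟩) i else 0) :
    (∀ i : Fin n, normE (X i) ≠ 0) ∧
      ∀ i i' : Fin n, g i = g i' →
        (fun j => X i j / normE (X i)) = (fun j => X i' j / normE (X i')) :=
  stmt7_general g hg θ hθ P hPdet hPnn δ d hδ hd lam a heig haunit hsimple X hX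

end DCSBM
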